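/- arXiv:1903.06876 — 6 statements merged into one kernel-verified Lean document; each statement's English description precedes it below -/
import Mathlib

section
/- The error between the full and reduced transfer functions admits the factorization H(ω) - H_m(ω) = C(ωI - A)^{-1}(I - Q_m(ω))(ωI - A)(I - P_m(ω))(ωI - A)^{-1}B, where P_m(ω) = V_m(ωI_m - A_m)^{-1}W_m^T(ωI - A) and Q_m(ω) = (ωI - A)V_m(ωI_m - A_m)^{-1}W_m^T. -/
/-!
With `S = ωI - A`, the hypothesis `Wmᵀ Vm = I` gives `Wmᵀ S Vm = ωI - Am`, so
`T = Vm (ωI - Am)⁻¹ Wmᵀ` is an outer inverse of `S` (`T S T = T`), with `Pm = T S` and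
`Qm = S T`. Then `H - Hm = C (S⁻¹ - T) B`, and for any invertible `s` with outer inverse `t`
one has `s⁻¹ - t = s⁻¹ (1 - s t) s (1 - t s) s⁻¹` in any ring.
-/

open Matrix

theorem inverse_sub_outerInverse_eq {R : Type*} [Ring R] {s s' t : R}
    (hl : s' * s = 1) (hr : s * s' = 1) (ht : t * s * t = t) :
    s' - t = s' * (1 - s * t) * s * (1 - t * s) * s' := by
  have left_factor : s' * (1 - s * t) = s' - t := by
    rw [mul_sub, mul_one, ← mul_assoc, hl, one_mul]
  have right_factor : (1 - t * s) * s' = s' - t := by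
    rw [sub_mul, one_mul, mul_assoc, hr, mul_one]
  symm
  calc s' * (1 - s * t) * s * (1 - t * s) * s' = s' * (1 - s * t) * s * ((1 - t * s) * s') := by
        simp only [mul_assoc]
    _ = (s' - t) * s * (s' - t) := by rw [left_factor, right_factor]
    _ = s' - t := by
        rw [sub_mul, sub_mul, hl, mul_sub, mul_sub, one_mul, one_mul, mul_assoc t s s', hr, mul_one,
          ht, sub_self, sub_zero]

theorem Matrix.outerInverse_of_mul_compression_eq_one {R k l : Type*} [Semiring R]
    [Fintype k] [DecidableEq k] [Fintype l] {S : Matrix l l R} {V : Matrix l k R} {W : Matrix k l R}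
    {M : Matrix k k R} (hM : M * (W * S * V) = 1) :
    V * M * W * S * (V * M * W) = V * M * W := by
  calc V * M * W * S * (V * M * W) = V * (M * (W * S * V)) * M * W := by
        simp only [Matrix.mul_assoc]
    _ = V * M * W := by rw [hM, Matrix.mul_one]

/-- Error factorization:
`H(ω) - H_m(ω) = C (ωI - A)⁻¹ (I - Q_m(ω)) (ωI - A) (I - P_m(ω)) (ωI - A)⁻¹ B`. -/
theorem error_factorization
    (n m p : ℕ)
    (A : Matrix (Fin n) (Fin n) ℝ) (B : Matrix (Fin n) (Fin p) ℝ)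
    (C : Matrix (Fin p) (Fin n) ℝ)
    (Vm Wm : Matrix (Fin n) (Fin m) ℝ)
    (hWV : Wmᵀ * Vm = 1)
    (Am : Matrix (Fin m) (Fin m) ℝ) (hAm : Am = Wmᵀ * A * Vm)
    (Bm : Matrix (Fin m) (Fin p) ℝ) (hBm : Bm = Wmᵀ * B)
    (Cm : Matrix (Fin p) (Fin m) ℝ) (hCm : Cm = C * Vm)
    (ω : ℝ)
    (hA : IsUnit (ω • (1 : Matrix (Fin n) (Fin n) ℝ) - A))
    (hAmω : IsUnit (ω • (1 : Matrix (Fin m) (Fin m) ℝ) - Am))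
    (Pm Qm : Matrix (Fin n) (Fin n) ℝ)
    (hPm : Pm = Vm * (ω • (1 : Matrix (Fin m) (Fin m) ℝ) - Am)⁻¹ * Wmᵀ *
        (ω • (1 : Matrix (Fin n) (Fin n) ℝ) - A))
    (hQm : Qm = (ω • (1 : Matrix (Fin n) (Fin n) ℝ) - A) * Vm *
        (ω • (1 : Matrix (Fin m) (Fin m) ℝ) - Am)⁻¹ * Wmᵀ) :
    C * (ω • (1 : Matrix (Fin n) (Fin n) ℝ) - A)⁻¹ * B -
        Cm * (ω • (1 : Matrix (Fin m) (Fin m) ℝ) - Am)⁻¹ * Bm =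
      C * (ω • (1 : Matrix (Fin n) (Fin n) ℝ) - A)⁻¹ * (1 - Qm) *
        (ω • (1 : Matrix (Fin n) (Fin n) ℝ) - A) * (1 - Pm) *
        (ω • (1 : Matrix (Fin n) (Fin n) ℝ) - A)⁻¹ * B := by
  set S := ω • (1 : Matrix (Fin n) (Fin n) ℝ) - A
  set Sm := ω • (1 : Matrix (Fin m) (Fin m) ℝ) - Am
  have compression : Wmᵀ * S * Vm = Sm := by
    rw [Matrix.mul_sub, Matrix.mul_smul, Matrix.mul_one, Matrix.sub_mul, Matrix.smul_mul, hWV,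
      ← hAm]
  have hS := (isUnit_iff_isUnit_det S).mp hA
  have hSm : Sm⁻¹ * (Wmᵀ * S * Vm) = 1 := by
    rw [compression]
    exact nonsing_inv_mul Sm ((isUnit_iff_isUnit_det Sm).mp hAmω)
  have outer := outerInverse_of_mul_compression_eq_one hSm
  calc C * S⁻¹ * B - Cm * Sm⁻¹ * Bm = C * (S⁻¹ - Vm * Sm⁻¹ * Wmᵀ) * B := by
        simp only [hCm, hBm, Matrix.mul_sub, Matrix.sub_mul, Matrix.mul_assoc]
    _ = C * (S⁻¹ * (1 - S * (Vm * Sm⁻¹ * Wmᵀ)) * S * (1 - Vm * Sm⁻¹ * Wmᵀ * S) * S⁻¹) * B := by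
        rw [inverse_sub_outerInverse_eq (nonsing_inv_mul S hS) (mul_nonsing_inv S hS) outer]
    _ = _ := by simp only [hPm, hQm, Matrix.mul_assoc]
end

section
/- If (σI - A)^{-1}B r lies in the column span of V_m (for a vector r ∈ ℝ^p), then the reduced transfer function tangentially interpolates the original: H_m(σ) r = H(σ) r. -/
/-!
Write `S = σI - A`. If `x = S⁻¹ B r = V z`, then `S V z = B r`; applying `Wᵀ` and using `Wᵀ V = I`
turns this into `(σI - A_m) z = B_m r`, so the reduced system recovers exactly the same `z`, and
`H_m(σ) r = C V z = C x = H(σ) r`.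
-/

open Matrix

namespace Matrix

variable {R : Type*} [CommRing R] {n m : Type*} [Fintype n] [DecidableEq n] [DecidableEq m]

theorem transpose_mul_smul_one_sub_mul {V W : Matrix n m R} (hWV : Wᵀ * V = 1)
    (σ : R) (A : Matrix n n R) :
    Wᵀ * (σ • 1 - A) * V = σ • 1 - Wᵀ * A * V := by
  rw [Matrix.mul_sub, Matrix.sub_mul, Matrix.mul_smul, Matrix.mul_one, Matrix.smul_mul, hWV]

/-- Petrov–Galerkin projection is exact on solutions lying in the trial space `range V`. -/
theorem mulVec_galerkin_solution_eq [Fintype m] {S : Matrix n n R} {V W : Matrix n m R}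
    (hS : IsUnit S) (hSm : IsUnit (Wᵀ * S * V)) {b : n → R} {z : m → R}
    (hz : V *ᵥ z = S⁻¹ *ᵥ b) :
    V *ᵥ ((Wᵀ * S * V)⁻¹ *ᵥ (Wᵀ *ᵥ b)) = S⁻¹ *ᵥ b := by
  have hSz : S *ᵥ (V *ᵥ z) = b := by
    rw [hz, mulVec_mulVec, mul_nonsing_inv _ ((isUnit_iff_isUnit_det S).mp hS), one_mulVec]
  have hSmz : (Wᵀ * S * V) *ᵥ z = Wᵀ *ᵥ b := by
    rw [← hSz, mulVec_mulVec, mulVec_mulVec, Matrix.mul_assoc]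
  rw [← hSmz, mulVec_mulVec z (Wᵀ * S * V)⁻¹,
    nonsing_inv_mul _ ((isUnit_iff_isUnit_det _).mp hSm), one_mulVec, hz]

end Matrix

theorem tangential_interpolation_right_general
    (n m p : ℕ)
    (A : Matrix (Fin n) (Fin n) ℝ) (B : Matrix (Fin n) (Fin p) ℝ)
    (C : Matrix (Fin p) (Fin n) ℝ)
    (Vm Wm : Matrix (Fin n) (Fin m) ℝ)
    (hWV : Wmᵀ * Vm = 1)
    (Am : Matrix (Fin m) (Fin m) ℝ) (hAm : Am = Wmᵀ * A * Vm)
    (Bm : Matrix (Fin m) (Fin p) ℝ) (hBm : Bm = Wmᵀ * B)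
    (Cm : Matrix (Fin p) (Fin m) ℝ) (hCm : Cm = C * Vm)
    (σ : ℝ)
    (hA : IsUnit (σ • (1 : Matrix (Fin n) (Fin n) ℝ) - A))
    (hAmσ : IsUnit (σ • (1 : Matrix (Fin m) (Fin m) ℝ) - Am))
    (r : Fin p → ℝ)
    (hr : ((σ • (1 : Matrix (Fin n) (Fin n) ℝ) - A)⁻¹ * B).mulVec r ∈
        LinearMap.range Vm.mulVecLin) :
    (Cm * (σ • (1 : Matrix (Fin m) (Fin m) ℝ) - Am)⁻¹ * Bm).mulVec r =
      (C * (σ • (1 : Matrix (Fin n) (Fin n) ℝ) - A)⁻¹ * B).mulVec r := by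
  obtain ⟨z, hz⟩ := hr
  have hproj : Wmᵀ * (σ • 1 - A) * Vm = σ • 1 - Am :=
    hAm ▸ transpose_mul_smul_one_sub_mul hWV σ A
  have hexact := mulVec_galerkin_solution_eq (b := B *ᵥ r) (z := z) hA (hproj ▸ hAmσ)
    (by rwa [mulVec_mulVec])
  rw [hCm, hBm, ← hproj]
  simp only [← mulVec_mulVec, hexact]

/-- If `(σI - A)⁻¹ B r` lies in the column span of `V_m`, then `H_m(σ) r = H(σ) r`. -/
theorem tangential_interpolation_right
    (n m p : ℕ)
    (A : Matrix (Fin n) (Fin n) ℝ) (B : Matrix (Fin n) (Fin p) ℝ)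
    (C : Matrix (Fin p) (Fin n) ℝ)
    (Vm Wm : Matrix (Fin n) (Fin m) ℝ)
    (hWV : Wmᵀ * Vm = 1)
    (hV : Function.Injective Vm.mulVecLin)
    (hW : Function.Injective Wm.mulVecLin)
    (Am : Matrix (Fin m) (Fin m) ℝ) (hAm : Am = Wmᵀ * A * Vm)
    (Bm : Matrix (Fin m) (Fin p) ℝ) (hBm : Bm = Wmᵀ * B)
    (Cm : Matrix (Fin p) (Fin m) ℝ) (hCm : Cm = C * Vm)
    (σ : ℝ)
    (hA : IsUnit (σ • (1 : Matrix (Fin n) (Fin n) ℝ) - A))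
    (hAmσ : IsUnit (σ • (1 : Matrix (Fin m) (Fin m) ℝ) - Am))
    (r : Fin p → ℝ)
    (hr : ((σ • (1 : Matrix (Fin n) (Fin n) ℝ) - A)⁻¹ * B).mulVec r ∈
        LinearMap.range Vm.mulVecLin) :
    (Cm * (σ • (1 : Matrix (Fin m) (Fin m) ℝ) - Am)⁻¹ * Bm).mulVec r =
      (C * (σ • (1 : Matrix (Fin n) (Fin n) ℝ) - A)⁻¹ * B).mulVec r :=
  tangential_interpolation_right_general n m p A B C Vm Wm hWV Am hAm Bm hBm Cm hCm σ hA hAmσ r hr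
end

section
/- If (μI - A)^{-T}C^T l lies in the column span of W_m (for a vector l ∈ ℝ^p), then l^T H_m(μ) = l^T H(μ). -/
/-!
Write `S = μI - A`. The tangential condition `S⁻ᵀ Cᵀ l = W_m x` says exactly that the row
vector `lᵀ C` equals `(W_m x)ᵀ S`. Hence `lᵀ H(μ) = lᵀ C S⁻¹ B = xᵀ W_mᵀ B`. Multiplying on the
right by `V_m` and using `W_mᵀ V_m = I` gives `lᵀ C_m = xᵀ (μI_m - A_m)`, so the same computation
in the reduced model yields `lᵀ H_m(μ) = xᵀ B_m = xᵀ W_mᵀ B`.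
-/

open Matrix

namespace Matrix

variable {R : Type*} [CommRing R] {ι κ ο : Type*} [Fintype ι] [DecidableEq ι] [Fintype ο]

theorem vecMul_eq_vecMul_of_eq_inv_transpose_mul_mulVec {S : Matrix ι ι R} (hS : IsUnit S)
    {C : Matrix ο ι R} {l : ο → R} {z : ι → R} (h : z = (Sᵀ⁻¹ * Cᵀ) *ᵥ l) :
    l ᵥ* C = z ᵥ* S := by
  have hSt : IsUnit Sᵀ.det := by rw [det_transpose]; exact S.isUnit_iff_isUnit_det.mp hS
  rw [← mulVec_transpose, ← mulVec_transpose, h, mulVec_mulVec, ← Matrix.mul_assoc,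
    mul_nonsing_inv _ hSt, Matrix.one_mul]

theorem vecMul_mul_inv_mul_of_vecMul_eq {S : Matrix ι ι R} (hS : IsUnit S)
    {C : Matrix ο ι R} {B : Matrix ι κ R} {l : ο → R} {y : ι → R} [Fintype κ]
    (h : l ᵥ* C = y ᵥ* S) : l ᵥ* (C * S⁻¹ * B) = y ᵥ* B := by
  rw [Matrix.mul_assoc, ← vecMul_vecMul, h, vecMul_vecMul, ← Matrix.mul_assoc,
    mul_nonsing_inv _ (S.isUnit_iff_isUnit_det.mp hS), Matrix.one_mul]

theorem transpose_mul_smul_one_sub_mul_of_transpose_mul_eq_one [DecidableEq κ]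
    {W V : Matrix ι κ R} (hWV : Wᵀ * V = 1) (A : Matrix ι ι R) (μ : R) :
    Wᵀ * (μ • 1 - A) * V = μ • 1 - Wᵀ * A * V := by
  rw [Matrix.mul_sub, Matrix.sub_mul, Matrix.mul_smul, Matrix.mul_one, Matrix.smul_mul, hWV]

end Matrix

theorem tangential_interpolation_left_general
    (n m p : ℕ)
    (A : Matrix (Fin n) (Fin n) ℝ) (B : Matrix (Fin n) (Fin p) ℝ)
    (C : Matrix (Fin p) (Fin n) ℝ)
    (Vm Wm : Matrix (Fin n) (Fin m) ℝ)
    (hWV : Wmᵀ * Vm = 1)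
    (Am : Matrix (Fin m) (Fin m) ℝ) (hAm : Am = Wmᵀ * A * Vm)
    (Bm : Matrix (Fin m) (Fin p) ℝ) (hBm : Bm = Wmᵀ * B)
    (Cm : Matrix (Fin p) (Fin m) ℝ) (hCm : Cm = C * Vm)
    (μ : ℝ)
    (hA : IsUnit (μ • (1 : Matrix (Fin n) (Fin n) ℝ) - A))
    (hAmμ : IsUnit (μ • (1 : Matrix (Fin m) (Fin m) ℝ) - Am))
    (l : Fin p → ℝ)
    (hl : (((μ • (1 : Matrix (Fin n) (Fin n) ℝ) - A)ᵀ)⁻¹ * Cᵀ).mulVec l ∈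
        LinearMap.range Wm.mulVecLin) :
    l ᵥ* (Cm * (μ • (1 : Matrix (Fin m) (Fin m) ℝ) - Am)⁻¹ * Bm) =
      l ᵥ* (C * (μ • (1 : Matrix (Fin n) (Fin n) ℝ) - A)⁻¹ * B) := by
  obtain ⟨x, hx⟩ := hl
  rw [mulVecLin_apply] at hx
  have hlC : l ᵥ* C = (Wm *ᵥ x) ᵥ* (μ • 1 - A) :=
    vecMul_eq_vecMul_of_eq_inv_transpose_mul_mulVec hA hx
  have hlCm : l ᵥ* Cm = x ᵥ* (μ • 1 - Am) := by
    rw [hCm, hAm, ← transpose_mul_smul_one_sub_mul_of_transpose_mul_eq_one hWV, ← vecMul_vecMul,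
      hlC, ← vecMul_transpose, vecMul_vecMul, vecMul_vecMul, Matrix.mul_assoc]
  rw [vecMul_mul_inv_mul_of_vecMul_eq hAmμ hlCm, vecMul_mul_inv_mul_of_vecMul_eq hA hlC, hBm,
    ← vecMul_vecMul, vecMul_transpose]

/-- If `(μI - A)⁻ᵀ Cᵀ l` lies in the column span of `W_m`, then `lᵀ H_m(μ) = lᵀ H(μ)`. -/
theorem tangential_interpolation_left
    (n m p : ℕ)
    (A : Matrix (Fin n) (Fin n) ℝ) (B : Matrix (Fin n) (Fin p) ℝ)
    (C : Matrix (Fin p) (Fin n) ℝ)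
    (Vm Wm : Matrix (Fin n) (Fin m) ℝ)
    (hWV : Wmᵀ * Vm = 1)
    (hV : Function.Injective Vm.mulVecLin)
    (hW : Function.Injective Wm.mulVecLin)
    (Am : Matrix (Fin m) (Fin m) ℝ) (hAm : Am = Wmᵀ * A * Vm)
    (Bm : Matrix (Fin m) (Fin p) ℝ) (hBm : Bm = Wmᵀ * B)
    (Cm : Matrix (Fin p) (Fin m) ℝ) (hCm : Cm = C * Vm)
    (μ : ℝ)
    (hA : IsUnit (μ • (1 : Matrix (Fin n) (Fin n) ℝ) - A))
    (hAmμ : IsUnit (μ • (1 : Matrix (Fin m) (Fin m) ℝ) - Am))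
    (l : Fin p → ℝ)
    (hl : (((μ • (1 : Matrix (Fin n) (Fin n) ℝ) - A)ᵀ)⁻¹ * Cᵀ).mulVec l ∈
        LinearMap.range Wm.mulVecLin) :
    l ᵥ* (Cm * (μ • (1 : Matrix (Fin m) (Fin m) ℝ) - Am)⁻¹ * Bm) =
      l ᵥ* (C * (μ • (1 : Matrix (Fin n) (Fin n) ℝ) - A)⁻¹ * B) :=
  tangential_interpolation_left_general n m p A B C Vm Wm hWV Am hAm Bm hBm Cm hCm μ hA hAmμ l hl
end

section
/- If for some σ both (σI - A)^{-1}B r ∈ Range(V_m) and (σI - A)^{-T}C^T l ∈ Range(W_m), then in addition to the value interpolation l^T H_m(σ) r = l^T H(σ) r, the derivatives also match: l^T H_m'(σ) r = l^T H'(σ) r. -/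
/-! With `E = σI - A`, the reduced pencil `σI - A_m` is the compression `Wᵀ E V`, because
`Wᵀ V = 1`. If `E⁻¹ B r = V v`, then `Wᵀ E V v = Wᵀ B r`, so the reduced solve returns `v` and
`lᵀ H_m(σ) r = lᵀ C V v = lᵀ H(σ) r`; dually the reduced adjoint solve returns `w`, where
`E⁻ᵀ Cᵀ l = W w`. As `H'(σ) = -C E⁻² B`, both derivatives equal `-(W w)ᵀ (V v) = -wᵀ v`. -/

open Matrix

section Compression

variable {R ι κ μ ν : Type*} [CommRing R] [Fintype ι] [Fintype μ] [Fintype ν]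

theorem Matrix.dotProduct_mul_mul_mulVec (l : ν → R) (C : Matrix ν ι R) (M : Matrix ι ι R)
    (B : Matrix ι μ R) (r : μ → R) :
    l ⬝ᵥ (C * M * B) *ᵥ r = l ⬝ᵥ C *ᵥ (M *ᵥ (B *ᵥ r)) := by
  simp only [mulVec_mulVec, Matrix.mul_assoc]

theorem Matrix.dotProduct_mul_mul_mul_mulVec (l : ν → R) (C : Matrix ν ι R) (M N : Matrix ι ι R)
    (B : Matrix ι μ R) (r : μ → R) :
    l ⬝ᵥ (C * (M * N) * B) *ᵥ r = (Mᵀ *ᵥ (Cᵀ *ᵥ l)) ⬝ᵥ (N *ᵥ (B *ᵥ r)) := by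
  rw [dotProduct_mul_mul_mulVec, ← mulVec_mulVec, dotProduct_mulVec, dotProduct_mulVec,
    ← mulVec_transpose, ← mulVec_transpose, mulVec_mulVec]

variable [DecidableEq ι] [DecidableEq κ]

theorem Matrix.smul_one_sub_compression {V W : Matrix ι κ R} (hWV : Wᵀ * V = 1)
    (A : Matrix ι ι R) (σ : R) :
    σ • (1 : Matrix κ κ R) - Wᵀ * A * V = Wᵀ * (σ • 1 - A) * V := by
  rw [Matrix.mul_sub, Matrix.sub_mul, Matrix.mul_smul, Matrix.smul_mul, Matrix.mul_one, hWV]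

variable [Fintype κ] {E : Matrix ι ι R} {V W : Matrix ι κ R}

theorem Matrix.nonsing_inv_compression_mulVec (hE : IsUnit E.det)
    (hEc : IsUnit (Wᵀ * E * V).det) {b : ι → R} {v : κ → R} (hv : E⁻¹ *ᵥ b = V *ᵥ v) :
    (Wᵀ * E * V)⁻¹ *ᵥ (Wᵀ *ᵥ b) = v := by
  have hsolve : (Wᵀ * E * V) *ᵥ v = Wᵀ *ᵥ b := by
    rw [← mulVec_mulVec, ← hv, mulVec_mulVec, Matrix.mul_assoc, mul_nonsing_inv _ hE,
      Matrix.mul_one]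
  rw [← hsolve, mulVec_mulVec, nonsing_inv_mul _ hEc, one_mulVec]

theorem Matrix.nonsing_inv_compression_transpose_mulVec (hE : IsUnit E.det)
    (hEc : IsUnit (Wᵀ * E * V).det) {c : ι → R} {w : κ → R} (hw : Eᵀ⁻¹ *ᵥ c = W *ᵥ w) :
    (Wᵀ * E * V)ᵀ⁻¹ *ᵥ (Vᵀ *ᵥ c) = w := by
  rw [transpose_mul, transpose_mul, transpose_transpose, ← Matrix.mul_assoc]
  refine nonsing_inv_compression_mulVec (isUnit_det_transpose _ hE) ?_ hw
  simpa [Matrix.mul_assoc] using isUnit_det_transpose _ hEc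

variable (C : Matrix ν ι R) (B : Matrix ι μ R) {l : ν → R} {r : μ → R} {v w : κ → R}

theorem Matrix.dotProduct_compression_inv_mulVec (hE : IsUnit E.det)
    (hEc : IsUnit (Wᵀ * E * V).det) (hv : (E⁻¹ * B) *ᵥ r = V *ᵥ v) :
    l ⬝ᵥ (C * V * (Wᵀ * E * V)⁻¹ * (Wᵀ * B)) *ᵥ r = l ⬝ᵥ (C * E⁻¹ * B) *ᵥ r := by
  rw [← mulVec_mulVec] at hv
  rw [dotProduct_mul_mul_mulVec, dotProduct_mul_mul_mulVec, ← mulVec_mulVec r Wᵀ B,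
    nonsing_inv_compression_mulVec hE hEc hv, ← mulVec_mulVec _ C V, hv]

theorem Matrix.dotProduct_compression_inv_sq_mulVec (hWV : Wᵀ * V = 1) (hE : IsUnit E.det)
    (hEc : IsUnit (Wᵀ * E * V).det) (hv : (E⁻¹ * B) *ᵥ r = V *ᵥ v)
    (hw : (Eᵀ⁻¹ * Cᵀ) *ᵥ l = W *ᵥ w) :
    l ⬝ᵥ (C * V * ((Wᵀ * E * V)⁻¹ * (Wᵀ * E * V)⁻¹) * (Wᵀ * B)) *ᵥ r =
      l ⬝ᵥ (C * (E⁻¹ * E⁻¹) * B) *ᵥ r := by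
  rw [← mulVec_mulVec] at hv hw
  rw [dotProduct_mul_mul_mul_mulVec, dotProduct_mul_mul_mul_mulVec, transpose_nonsing_inv,
    transpose_nonsing_inv, hv, hw, transpose_mul C V, ← mulVec_mulVec l Vᵀ Cᵀ,
    nonsing_inv_compression_transpose_mulVec hE hEc hw, ← mulVec_mulVec r Wᵀ B,
    nonsing_inv_compression_mulVec hE hEc hv, dotProduct_mulVec, ← mulVec_transpose,
    mulVec_mulVec, ← transpose_transpose (Vᵀ * W), transpose_mul, transpose_transpose, hWV,
    transpose_one, one_mulVec]

end Compression

-- Any norm works here: all norms on a finite-dimensional space induce the same topology.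
attribute [local instance] Matrix.linftyOpNormedRing Matrix.linftyOpNormedAlgebra

section Resolvent

variable {𝕜 ι κ μ : Type*} [Fintype ι] [DecidableEq ι] [Fintype κ] [Fintype μ]

theorem Matrix.resolvent_eq_nonsing_inv [CommRing 𝕜] (A : Matrix ι ι 𝕜) (ω : 𝕜) :
    resolvent A ω = (ω • 1 - A)⁻¹ := by
  rw [resolvent, Algebra.algebraMap_eq_smul_one, nonsing_inv_eq_ringInverse]

variable [RCLike 𝕜]

theorem HasDerivAt.dotProduct_mul_mulVec {f : 𝕜 → Matrix ι ι 𝕜} {f' : Matrix ι ι 𝕜} {σ : 𝕜}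
    (hf : HasDerivAt f f' σ) (C : Matrix κ ι 𝕜) (B : Matrix ι μ 𝕜) (l : κ → 𝕜) (r : μ → 𝕜) :
    HasDerivAt (fun ω => l ⬝ᵥ (C * f ω * B) *ᵥ r) (l ⬝ᵥ (C * f' * B) *ᵥ r) σ := by
  let φ : Matrix ι ι 𝕜 →ₗ[𝕜] 𝕜 :=
    { toFun := fun M => l ⬝ᵥ (C * M * B) *ᵥ r
      map_add' := fun M N => by simp [Matrix.mul_add, Matrix.add_mul, add_mulVec]
      map_smul' := fun c M => by simp [smul_mulVec] }
  exact φ.toContinuousLinearMap.hasFDerivAt.comp_hasDerivAt σ hf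

theorem hasDerivAt_dotProduct_mul_inv_mul_mulVec {A : Matrix ι ι 𝕜} {σ : 𝕜}
    (hσ : IsUnit (σ • (1 : Matrix ι ι 𝕜) - A)) (C : Matrix κ ι 𝕜) (B : Matrix ι μ 𝕜)
    (l : κ → 𝕜) (r : μ → 𝕜) :
    HasDerivAt (fun ω => l ⬝ᵥ (C * (ω • (1 : Matrix ι ι 𝕜) - A)⁻¹ * B) *ᵥ r)
      (-(l ⬝ᵥ (C * ((σ • (1 : Matrix ι ι 𝕜) - A)⁻¹ * (σ • (1 : Matrix ι ι 𝕜) - A)⁻¹) * B) *ᵥ r))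
      σ := by
  have hσA : σ ∈ resolventSet 𝕜 A := by
    rwa [spectrum.mem_resolventSet_iff, Algebra.algebraMap_eq_smul_one]
  have hres := spectrum.hasDerivAt_resolvent_const_left hσA
  simp only [funext (Matrix.resolvent_eq_nonsing_inv A), sq] at hres
  simpa [neg_mulVec] using hres.dotProduct_mul_mulVec C B l r

end Resolvent

theorem tangential_hermite_interpolation_general
    (n m p : ℕ)
    (A : Matrix (Fin n) (Fin n) ℝ) (B : Matrix (Fin n) (Fin p) ℝ)
    (C : Matrix (Fin p) (Fin n) ℝ)
    (Vm Wm : Matrix (Fin n) (Fin m) ℝ)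
    (hWV : Wmᵀ * Vm = 1)
    (Am : Matrix (Fin m) (Fin m) ℝ) (hAm : Am = Wmᵀ * A * Vm)
    (Bm : Matrix (Fin m) (Fin p) ℝ) (hBm : Bm = Wmᵀ * B)
    (Cm : Matrix (Fin p) (Fin m) ℝ) (hCm : Cm = C * Vm)
    (σ : ℝ)
    (hA : IsUnit (σ • (1 : Matrix (Fin n) (Fin n) ℝ) - A))
    (hAmσ : IsUnit (σ • (1 : Matrix (Fin m) (Fin m) ℝ) - Am))
    (r l : Fin p → ℝ)
    (hr : ((σ • (1 : Matrix (Fin n) (Fin n) ℝ) - A)⁻¹ * B).mulVec r ∈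
        LinearMap.range Vm.mulVecLin)
    (hl : (((σ • (1 : Matrix (Fin n) (Fin n) ℝ) - A)ᵀ)⁻¹ * Cᵀ).mulVec l ∈
        LinearMap.range Wm.mulVecLin)
    (h hm : ℝ → ℝ)
    (hh : ∀ ω : ℝ, h ω = l ⬝ᵥ (C * (ω • (1 : Matrix (Fin n) (Fin n) ℝ) - A)⁻¹ * B).mulVec r)
    (hhm : ∀ ω : ℝ,
      hm ω = l ⬝ᵥ (Cm * (ω • (1 : Matrix (Fin m) (Fin m) ℝ) - Am)⁻¹ * Bm).mulVec r) :
    hm σ = h σ ∧ deriv hm σ = deriv h σ := by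
  obtain ⟨v, hv⟩ := hr
  obtain ⟨w, hw⟩ := hl
  have hEm : σ • (1 : Matrix (Fin m) (Fin m) ℝ) - Am =
      Wmᵀ * (σ • (1 : Matrix (Fin n) (Fin n) ℝ) - A) * Vm := by
    rw [hAm, smul_one_sub_compression hWV]
  have hE := (isUnit_iff_isUnit_det _).mp hA
  have hEc : IsUnit (Wmᵀ * (σ • (1 : Matrix (Fin n) (Fin n) ℝ) - A) * Vm).det :=
    hEm ▸ (isUnit_iff_isUnit_det _).mp hAmσ
  refine ⟨?_, ?_⟩
  · rw [hh, hhm, hEm, hCm, hBm, dotProduct_compression_inv_mulVec C B hE hEc hv.symm]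
  · rw [show h = _ from funext hh, show hm = _ from funext hhm,
      (hasDerivAt_dotProduct_mul_inv_mul_mulVec hA C B l r).deriv,
      (hasDerivAt_dotProduct_mul_inv_mul_mulVec hAmσ Cm Bm l r).deriv, hEm, hCm, hBm,
      dotProduct_compression_inv_sq_mulVec C B hWV hE hEc hv.symm hw.symm]

/-- If both `(σI - A)⁻¹ B r ∈ Range(V_m)` and `(σI - A)⁻ᵀ Cᵀ l ∈ Range(W_m)`, then
`lᵀ H_m(σ) r = lᵀ H(σ) r` and the derivatives match: `lᵀ H_m'(σ) r = lᵀ H'(σ) r`. -/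
theorem tangential_hermite_interpolation
    (n m p : ℕ)
    (A : Matrix (Fin n) (Fin n) ℝ) (B : Matrix (Fin n) (Fin p) ℝ)
    (C : Matrix (Fin p) (Fin n) ℝ)
    (Vm Wm : Matrix (Fin n) (Fin m) ℝ)
    (hWV : Wmᵀ * Vm = 1)
    (hV : Function.Injective Vm.mulVecLin)
    (hW : Function.Injective Wm.mulVecLin)
    (Am : Matrix (Fin m) (Fin m) ℝ) (hAm : Am = Wmᵀ * A * Vm)
    (Bm : Matrix (Fin m) (Fin p) ℝ) (hBm : Bm = Wmᵀ * B)
    (Cm : Matrix (Fin p) (Fin m) ℝ) (hCm : Cm = C * Vm)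
    (σ : ℝ)
    (hA : IsUnit (σ • (1 : Matrix (Fin n) (Fin n) ℝ) - A))
    (hAmσ : IsUnit (σ • (1 : Matrix (Fin m) (Fin m) ℝ) - Am))
    (r l : Fin p → ℝ)
    (hr : ((σ • (1 : Matrix (Fin n) (Fin n) ℝ) - A)⁻¹ * B).mulVec r ∈
        LinearMap.range Vm.mulVecLin)
    (hl : (((σ • (1 : Matrix (Fin n) (Fin n) ℝ) - A)ᵀ)⁻¹ * Cᵀ).mulVec l ∈
        LinearMap.range Wm.mulVecLin)
    (h hm : ℝ → ℝ)
    (hh : ∀ ω : ℝ, h ω = l ⬝ᵥ (C * (ω • (1 : Matrix (Fin n) (Fin n) ℝ) - A)⁻¹ * B).mulVec r)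
    (hhm : ∀ ω : ℝ,
      hm ω = l ⬝ᵥ (Cm * (ω • (1 : Matrix (Fin m) (Fin m) ℝ) - Am)⁻¹ * Bm).mulVec r) :
    hm σ = h σ ∧ deriv hm σ = deriv h σ :=
  tangential_hermite_interpolation_general n m p A B C Vm Wm hWV Am hAm Bm hBm Cm hCm σ hA hAmσ r l
    hr hl h hm hh hhm
end

section
/- For matrices of resolvent directions: if T_{m+1} = V_{m+1} G_{m+1} where T_{m+1} = [(σ_1 I - A)^{-1}BR_1, ..., (σ_{m+1} I - A)^{-1}BR_{m+1}], R_{m+1} = [R_1, ..., R_{m+1}], and D̃^{(1)}_{m+1} = Diag(σ_1,...,σ_{m+1}) ⊗ I_s, then A V_{m+1} = (V_{m+1} G_{m+1} D̃^{(1)}_{m+1} - B R_{m+1}) G_{m+1}^{-1}. -/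
/-!
Each block `X_j = (σ_j I - A)⁻¹ B R_j` of `T` solves `(σ_j I - A) X_j = B R_j`, i.e.
`A X_j = σ_j X_j - B R_j`. Side by side these give `A T = T D̃ - B R`, and `V = T G⁻¹`.
-/

open Matrix

namespace Matrix

variable {R : Type*} [CommRing R] {l m n k ι : Type*}

def blockCols (M : ι → Matrix m k R) : Matrix m (ι × k) R :=
  of fun i jk => M jk.1 i jk.2

theorem mul_blockCols [Fintype m] (A : Matrix l m R) (M : ι → Matrix m k R) :
    A * blockCols M = blockCols fun j => A * M j := by
  ext i jk
  simp only [blockCols, mul_apply, of_apply]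

theorem blockCols_mul_diagonal [Fintype ι] [Fintype k] [DecidableEq ι] [DecidableEq k]
    (M : ι → Matrix m k R) (d : ι → R) :
    blockCols M * diagonal (fun jk : ι × k => d jk.1) = blockCols fun j => d j • M j := by
  ext i jk
  simp only [blockCols, mul_diagonal, of_apply, smul_apply, smul_eq_mul, mul_comm]

theorem blockCols_sub (M N : ι → Matrix m k R) :
    blockCols (fun j => M j - N j) = blockCols M - blockCols N :=
  rfl

theorem mul_smul_one_sub_inv_mul [Fintype m] [DecidableEq m] {σ : R} {A : Matrix m m R}
    (h : IsUnit (σ • (1 : Matrix m m R) - A)) (X : Matrix m n R) :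
    A * ((σ • 1 - A)⁻¹ * X) = σ • ((σ • 1 - A)⁻¹ * X) - X := by
  set Y := (σ • 1 - A)⁻¹ * X
  have hY : (σ • 1 - A) * Y = X := by
    rw [← Matrix.mul_assoc, mul_nonsing_inv _ ((isUnit_iff_isUnit_det _).mp h), Matrix.one_mul]
  rw [Matrix.sub_mul, Matrix.smul_mul, Matrix.one_mul] at hY
  calc A * Y = σ • Y - (σ • Y - A * Y) := (sub_sub_cancel _ _).symm
    _ = σ • Y - X := by rw [hY]

end Matrix

/-- If `T_{m+1} = V_{m+1} G_{m+1}` where `T_{m+1}` collects the tangential resolvent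
directions `(σ_j I - A)⁻¹ B R_j`, then
`A V_{m+1} = (V_{m+1} G_{m+1} D̃ - B 𝓡) G_{m+1}⁻¹` with `D̃ = Diag(σ_j) ⊗ I_s`. -/
theorem lanczos_relation
    (n p s m : ℕ)
    (A : Matrix (Fin n) (Fin n) ℝ) (B : Matrix (Fin n) (Fin p) ℝ)
    (σ : Fin (m + 1) → ℝ)
    (hσ : ∀ j, IsUnit (σ j • (1 : Matrix (Fin n) (Fin n) ℝ) - A))
    (R : Fin (m + 1) → Matrix (Fin p) (Fin s) ℝ)
    (V : Matrix (Fin n) (Fin (m + 1) × Fin s) ℝ)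
    (G : Matrix (Fin (m + 1) × Fin s) (Fin (m + 1) × Fin s) ℝ)
    (hG : IsUnit G)
    (T : Matrix (Fin n) (Fin (m + 1) × Fin s) ℝ)
    (hT : T = Matrix.of fun i js =>
      ((σ js.1 • (1 : Matrix (Fin n) (Fin n) ℝ) - A)⁻¹ * B * R js.1) i js.2)
    (hTVG : T = V * G)
    (Rcat : Matrix (Fin p) (Fin (m + 1) × Fin s) ℝ)
    (hRcat : Rcat = Matrix.of fun i js => R js.1 i js.2)
    (Dtilde : Matrix (Fin (m + 1) × Fin s) (Fin (m + 1) × Fin s) ℝ)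
    (hD : Dtilde = Matrix.diagonal fun js => σ js.1) :
    A * V = (V * G * Dtilde - B * Rcat) * G⁻¹ := by
  set X := fun j => (σ j • (1 : Matrix (Fin n) (Fin n) ℝ) - A)⁻¹ * (B * R j)
  replace hT : T = blockCols X := by simp only [hT, X, blockCols, Matrix.mul_assoc]
  replace hRcat : Rcat = blockCols R := hRcat
  have hAT : A * T = T * Dtilde - B * Rcat := by
    rw [hT, hD, hRcat, mul_blockCols, mul_blockCols, blockCols_mul_diagonal, ← blockCols_sub]
    simp only [X, mul_smul_one_sub_inv_mul (hσ _)]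
  have hV : V = T * G⁻¹ := by
    rw [hTVG, Matrix.mul_assoc, mul_nonsing_inv _ ((isUnit_iff_isUnit_det _).mp hG),
      Matrix.mul_one]
  rw [hV, ← Matrix.mul_assoc, hAT, ← hV, ← hTVG]
end

section
/- If the projection matrices are block diagonal, 𝒱_m = Diag(V¹, V²) and 𝒲_m = Diag(W¹, W²) with 𝒲_m^T 𝒱_m = I, then the projected matrix 𝒲_m^T 𝒜 𝒱_m with 𝒜 = [[0, I_n], [-K, -D]] has the block form [[0, (W¹)^T V²], [-(W²)^T K V¹, -(W²)^T D V²]]; in particular, if (W¹)^T V² is invertible, the reduced system can be transformed into second-order form, i.e., the reduced transfer function 𝒞𝒱_m(ωI - 𝒲_m^T𝒜𝒱_m)^{-1}𝒲_m^Tℬ equals C_m(ω² S + ω D_m + K_m)^{-1}B_m for some matrices with S = ((W¹)^T V²)^{-1} appropriately inserted. -/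
/-!
Write `E = (W¹)ᵀV²`, `K_m = (W²)ᵀKV¹`, `D_m = (W²)ᵀDV²`. As `𝒱`, `𝒲` are block diagonal and `𝒞`,
`ℬ` live on the first, resp. second, block, the reduced transfer function is `C V¹ · R₁₂ · (W²)ᵀB`
with `R₁₂` the upper right block of `(ωI - [[0, E], [-K_m, -D_m]])⁻¹`. This pencil factors as
`[[ωI, -I], [K_m, (ωI + D_m)E⁻¹]] · Diag(I, E)`; eliminating the `-I` block of the first factor
shows that the upper right block of its inverse is `(K_m + ω(ωI + D_m)E⁻¹)⁻¹`, the inverse of the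
second-order pencil.
-/

open Matrix

namespace Matrix

variable {R : Type*} {l m n o p : Type*}

theorem fromCols_zero_mul_mul_fromRows_zero [Semiring R] [Fintype l] [Fintype m] [Fintype n]
    (X : Matrix o m R) (M : Matrix (m ⊕ n) (l ⊕ n) R) (Y : Matrix n p R) :
    fromCols X (0 : Matrix o n R) * M * fromRows (0 : Matrix l p R) Y =
      X * M.toBlocks₁₂ * Y := by
  rw [← fromBlocks_toBlocks M, fromCols_mul_fromBlocks, fromCols_mul_fromRows]
  simp [Matrix.mul_assoc]

theorem transpose_fromBlocks_diagonal_mul_companion_mul_fromBlocks_diagonal [Ring R] [Fintype m]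
    [DecidableEq m] (K D : Matrix m m R) (V₁ V₂ W₁ W₂ : Matrix m n R) :
    (fromBlocks W₁ 0 0 W₂)ᵀ * (fromBlocks 0 1 (-K) (-D) : Matrix (m ⊕ m) (m ⊕ m) R) *
        fromBlocks V₁ 0 0 V₂ =
      fromBlocks 0 (W₁ᵀ * V₂) (-(W₂ᵀ * K * V₁)) (-(W₂ᵀ * D * V₂)) := by
  rw [fromBlocks_transpose, transpose_zero, fromBlocks_multiply, fromBlocks_multiply]
  simp [Matrix.mul_assoc]

variable [CommRing R] [Fintype m] [DecidableEq m]

theorem inv_fromBlocks_smul_one_neg_one (c : R) (K P : Matrix m m R) (h : IsUnit (K + c • P)) :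
    (fromBlocks (c • 1) (-1) K P)⁻¹ =
      fromBlocks ((K + c • P)⁻¹ * P) (K + c • P)⁻¹ (c • ((K + c • P)⁻¹ * P) - 1)
        (c • (K + c • P)⁻¹) := by
  have hΦ : (K + c • P) * (K + c • P)⁻¹ = 1 := mul_nonsing_inv _ ((isUnit_iff_isUnit_det _).mp h)
  refine inv_eq_right_inv ?_
  rw [fromBlocks_multiply, ← fromBlocks_one]
  congr 1
  · simp
  · simp
  · rw [mul_sub, mul_smul_comm, ← smul_mul_assoc, add_sub_assoc', ← Matrix.mul_assoc,
      ← Matrix.mul_assoc, ← add_mul, ← add_mul, hΦ, Matrix.one_mul, Matrix.mul_one, sub_self]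
  · rw [mul_smul_comm, ← smul_mul_assoc, ← add_mul, hΦ]

theorem toBlocks₁₂_inv_smul_one_sub_fromBlocks_zero (ω : R) (E K D : Matrix m m R)
    (hE : IsUnit E) (hΦ : IsUnit (ω ^ 2 • E⁻¹ + ω • (D * E⁻¹) + K)) :
    (ω • 1 - fromBlocks 0 E (-K) (-D))⁻¹.toBlocks₁₂ = (ω ^ 2 • E⁻¹ + ω • (D * E⁻¹) + K)⁻¹ := by
  have hEE : E⁻¹ * E = 1 := nonsing_inv_mul _ ((isUnit_iff_isUnit_det _).mp hE)
  have hfactor : ω • 1 - fromBlocks 0 E (-K) (-D) =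
      fromBlocks (ω • 1) (-1) K ((ω • 1 + D) * E⁻¹) * fromBlocks 1 0 0 E := by
    rw [fromBlocks_multiply, ← fromBlocks_one, fromBlocks_smul, sub_eq_add_neg, fromBlocks_neg,
      fromBlocks_add]
    simp [Matrix.mul_assoc, hEE]
  have hpencil : K + ω • ((ω • 1 + D) * E⁻¹) = ω ^ 2 • E⁻¹ + ω • (D * E⁻¹) + K := by
    rw [add_mul, smul_mul_assoc, Matrix.one_mul, smul_add, smul_smul, ← pow_two, add_comm]
  rw [hfactor, mul_inv_rev, inv_fromBlocks_zero₁₂_of_isUnit_iff 1 0 E (iff_of_true isUnit_one hE),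
    inv_fromBlocks_smul_one_neg_one _ _ _ (hpencil ▸ hΦ), hpencil, fromBlocks_multiply]
  simp

end Matrix

theorem structure_preserving_second_order_general
    (n p ms : ℕ)
    (K D : Matrix (Fin n) (Fin n) ℝ)
    (B : Matrix (Fin n) (Fin p) ℝ) (C : Matrix (Fin p) (Fin n) ℝ)
    (V1 V2 W1 W2 : Matrix (Fin n) (Fin ms) ℝ)
    (E : Matrix (Fin ms) (Fin ms) ℝ) (hE : E = W1ᵀ * V2) (hEinv : IsUnit E)
    (𝒜 : Matrix (Fin n ⊕ Fin n) (Fin n ⊕ Fin n) ℝ)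
    (h𝒜 : 𝒜 = Matrix.fromBlocks 0 1 (-K) (-D))
    (ℬ : Matrix (Fin n ⊕ Fin n) (Fin p) ℝ)
    (hℬ : ℬ = Matrix.of fun i j => Sum.elim (fun _ => (0 : ℝ)) (fun k => B k j) i)
    (𝒞 : Matrix (Fin p) (Fin n ⊕ Fin n) ℝ)
    (h𝒞 : 𝒞 = Matrix.of fun i j => Sum.elim (fun k => C i k) (fun _ => (0 : ℝ)) j)
    (𝒱 : Matrix (Fin n ⊕ Fin n) (Fin ms ⊕ Fin ms) ℝ)
    (h𝒱 : 𝒱 = Matrix.fromBlocks V1 0 0 V2)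
    (𝒲 : Matrix (Fin n ⊕ Fin n) (Fin ms ⊕ Fin ms) ℝ)
    (h𝒲 : 𝒲 = Matrix.fromBlocks W1 0 0 W2)
    (ω : ℝ)
    (hso : IsUnit (ω ^ 2 • E⁻¹ + ω • (W2ᵀ * D * V2 * E⁻¹) + W2ᵀ * K * V1)) :
    𝒲ᵀ * 𝒜 * 𝒱 = Matrix.fromBlocks 0 (W1ᵀ * V2) (-(W2ᵀ * K * V1)) (-(W2ᵀ * D * V2)) ∧
      (𝒞 * 𝒱) * (ω • (1 : Matrix (Fin ms ⊕ Fin ms) (Fin ms ⊕ Fin ms) ℝ) - 𝒲ᵀ * 𝒜 * 𝒱)⁻¹ *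
          (𝒲ᵀ * ℬ) =
        (C * V1) * (ω ^ 2 • E⁻¹ + ω • (W2ᵀ * D * V2 * E⁻¹) + W2ᵀ * K * V1)⁻¹ *
          (W2ᵀ * B) := by
  have hproj : 𝒲ᵀ * 𝒜 * 𝒱 =
      fromBlocks 0 (W1ᵀ * V2) (-(W2ᵀ * K * V1)) (-(W2ᵀ * D * V2)) := by
    rw [h𝒲, h𝒜, h𝒱]
    exact transpose_fromBlocks_diagonal_mul_companion_mul_fromBlocks_diagonal K D V1 V2 W1 W2
  have hCV : 𝒞 * 𝒱 = fromCols (C * V1) 0 := by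
    have h𝒞' : 𝒞 = fromCols C 0 := by
      rw [h𝒞]
      ext i (j | j) <;> rfl
    rw [h𝒞', h𝒱, fromCols_mul_fromBlocks]
    simp
  have hWB : 𝒲ᵀ * ℬ = fromRows 0 (W2ᵀ * B) := by
    have hℬ' : ℬ = fromRows 0 B := by
      rw [hℬ]
      ext (i | i) j <;> rfl
    rw [hℬ', h𝒲, fromBlocks_transpose, transpose_zero, fromBlocks_mul_fromRows]
    simp
  refine ⟨hproj, ?_⟩
  rw [hCV, hWB, hproj, ← hE, fromCols_zero_mul_mul_fromRows_zero,
    toBlocks₁₂_inv_smul_one_sub_fromBlocks_zero ω E _ _ hEinv hso]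

/-- With block-diagonal projection matrices `𝒱 = Diag(V¹,V²)`, `𝒲 = Diag(W¹,W²)` and
`𝒜 = [[0, I],[-K, -D]]`, the projected matrix is
`𝒲ᵀ𝒜𝒱 = [[0, (W¹)ᵀV²], [-(W²)ᵀKV¹, -(W²)ᵀDV²]]`; moreover, if `E = (W¹)ᵀV²` is
invertible, the reduced transfer function has second-order form:
`𝒞𝒱 (ωI - 𝒲ᵀ𝒜𝒱)⁻¹ 𝒲ᵀℬ = C_m (ω² S + ω D_m + K_m)⁻¹ B_m` with `S = E⁻¹`,
`D_m = (W²)ᵀ D V² E⁻¹`, `K_m = (W²)ᵀ K V¹`, `B_m = (W²)ᵀ B`, `C_m = C V¹`. -/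
theorem structure_preserving_second_order
    (n p ms : ℕ)
    (K D : Matrix (Fin n) (Fin n) ℝ)
    (B : Matrix (Fin n) (Fin p) ℝ) (C : Matrix (Fin p) (Fin n) ℝ)
    (V1 V2 W1 W2 : Matrix (Fin n) (Fin ms) ℝ)
    (hW1V1 : W1ᵀ * V1 = 1) (hW2V2 : W2ᵀ * V2 = 1)
    (E : Matrix (Fin ms) (Fin ms) ℝ) (hE : E = W1ᵀ * V2) (hEinv : IsUnit E)
    (𝒜 : Matrix (Fin n ⊕ Fin n) (Fin n ⊕ Fin n) ℝ)
    (h𝒜 : 𝒜 = Matrix.fromBlocks 0 1 (-K) (-D))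
    (ℬ : Matrix (Fin n ⊕ Fin n) (Fin p) ℝ)
    (hℬ : ℬ = Matrix.of fun i j => Sum.elim (fun _ => (0 : ℝ)) (fun k => B k j) i)
    (𝒞 : Matrix (Fin p) (Fin n ⊕ Fin n) ℝ)
    (h𝒞 : 𝒞 = Matrix.of fun i j => Sum.elim (fun k => C i k) (fun _ => (0 : ℝ)) j)
    (𝒱 : Matrix (Fin n ⊕ Fin n) (Fin ms ⊕ Fin ms) ℝ)
    (h𝒱 : 𝒱 = Matrix.fromBlocks V1 0 0 V2)
    (𝒲 : Matrix (Fin n ⊕ Fin n) (Fin ms ⊕ Fin ms) ℝ)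
    (h𝒲 : 𝒲 = Matrix.fromBlocks W1 0 0 W2)
    (ω : ℝ)
    (hred : IsUnit (ω • (1 : Matrix (Fin ms ⊕ Fin ms) (Fin ms ⊕ Fin ms) ℝ) - 𝒲ᵀ * 𝒜 * 𝒱))
    (hso : IsUnit (ω ^ 2 • E⁻¹ + ω • (W2ᵀ * D * V2 * E⁻¹) + W2ᵀ * K * V1)) :
    𝒲ᵀ * 𝒜 * 𝒱 = Matrix.fromBlocks 0 (W1ᵀ * V2) (-(W2ᵀ * K * V1)) (-(W2ᵀ * D * V2)) ∧
      (𝒞 * 𝒱) * (ω • (1 : Matrix (Fin ms ⊕ Fin ms) (Fin ms ⊕ Fin ms) ℝ) - 𝒲ᵀ * 𝒜 * 𝒱)⁻¹ *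
          (𝒲ᵀ * ℬ) =
        (C * V1) * (ω ^ 2 • E⁻¹ + ω • (W2ᵀ * D * V2 * E⁻¹) + W2ᵀ * K * V1)⁻¹ *
          (W2ᵀ * B) :=
  structure_preserving_second_order_general n p ms K D B C V1 V2 W1 W2 E hE hEinv 𝒜 h𝒜 ℬ hℬ 𝒞 h𝒞 𝒱
    h𝒱 𝒲 h𝒲 ω hso
end
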